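/- Let ε > 0 and let (f, g) be a pair of ε-potentials. Then for every x ∈ Ω₀: (λ/(2Λ)) · max_{y ∈ Ω₁} ξ(x, y) ≤ ξ(x, f'(x)) = max_{x' ∈ Ω₀} ξ(x', f'(x)) ≤ max_{y ∈ Ω₁} ξ(x, y). -/

import Mathlib

/-!
Testing the potential equation for `x'` on the section `S_x` shows that `f'(x) = Tmap x` is a
subgradient of `f` at `x`. By symmetry `g` is convex, so `ξ(x, ·)` is concave and
`S_x = [y_m(x), y_M(x)]`. Let `M = max ξ(x, ·)` and `m = μ₁(S_x)`. Jensen's inequality on `S_x`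
gives `ε ≤ m ξ(x, f'(x))`, and `m ≤ Λ |S_x|`. Since `ξ(x, ·)` lies above the tent of height `M`
over `S_x`, also `ε ≥ λ ∫_{S_x} ξ(x, ·) ≥ λ M |S_x| / 2`. The identity in the middle is the
subgradient inequality.
-/

open MeasureTheory Set
open scoped Classical ENNReal

noncomputable section

/-- `μ` is a probability measure supported on `[a,b]` with continuous density `u`
bounded below by `lam` and above by `Lam` on `[a,b]`. -/
def IsGoodMarginal (μ : Measure ℝ) (u : ℝ → ℝ) (a b lam Lam : ℝ) : Prop :=
  IsProbabilityMeasure μ ∧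
  μ = (volume.restrict (Icc a b)).withDensity (fun x => ENNReal.ofReal (u x)) ∧
  ContinuousOn u (Icc a b) ∧
  ∀ x ∈ Icc a b, lam ≤ u x ∧ u x ≤ Lam

/-- `(f,g)` is a pair of `ε`-potentials for the quadratically regularized OT problem. -/
def IsPotentialPair (μ₀ μ₁ : Measure ℝ) (a₀ b₀ a₁ b₁ ε : ℝ) (f g : ℝ → ℝ) : Prop :=
  (∃ K, LipschitzOnWith K f (Icc a₀ b₀)) ∧
  (∃ K, LipschitzOnWith K g (Icc a₁ b₁)) ∧
  (∀ x ∈ Icc a₀ b₀, ∫ y in Icc a₁ b₁, max (x * y - f x - g y) 0 ∂μ₁ = ε) ∧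
  (∀ y ∈ Icc a₁ b₁, ∫ x in Icc a₀ b₀, max (x * y - f x - g y) 0 ∂μ₀ = ε)

/-- the `x`-section `S_x` of the support of the optimal coupling. -/
def secX (f g : ℝ → ℝ) (a₁ b₁ x : ℝ) : Set ℝ :=
  {y ∈ Icc a₁ b₁ | 0 ≤ x * y - f x - g y}

/-- the `y`-section `S^y` of the support of the optimal coupling. -/
def secY (f g : ℝ → ℝ) (a₀ b₀ y : ℝ) : Set ℝ :=
  {x ∈ Icc a₀ b₀ | 0 ≤ x * y - f x - g y}

/-- `T_ε(x) = (∫_{S_x} y dμ₁)/μ₁(S_x)`, the derivative `f'` of the potential `f`. -/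
def Tmap (μ₁ : Measure ℝ) (f g : ℝ → ℝ) (a₁ b₁ x : ℝ) : ℝ :=
  (∫ y in secX f g a₁ b₁ x, y ∂μ₁) / (μ₁ (secX f g a₁ b₁ x)).toReal

/-- the symmetric quantity, the derivative `g'` of the potential `g`. -/
def Gmap (μ₀ : Measure ℝ) (f g : ℝ → ℝ) (a₀ b₀ y : ℝ) : ℝ :=
  (∫ x in secY f g a₀ b₀ y, x ∂μ₀) / (μ₀ (secY f g a₀ b₀ y)).toReal

/-- left endpoint `y_m(x)` of `S_x`. -/
def ymF (f g : ℝ → ℝ) (a₁ b₁ x : ℝ) : ℝ := sInf (secX f g a₁ b₁ x)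

/-- right endpoint `y_M(x)` of `S_x`. -/
def yMF (f g : ℝ → ℝ) (a₁ b₁ x : ℝ) : ℝ := sSup (secX f g a₁ b₁ x)

/-- left endpoint `x_m(y)` of `S^y`. -/
def xmF (f g : ℝ → ℝ) (a₀ b₀ y : ℝ) : ℝ := sInf (secY f g a₀ b₀ y)

/-- right endpoint `x_M(y)` of `S^y`. -/
def xMF (f g : ℝ → ℝ) (a₀ b₀ y : ℝ) : ℝ := sSup (secY f g a₀ b₀ y)

/-- `T₀` is the (nondecreasing) Monge map from `μ₀` to `μ₁`. -/
def IsMongeMap (μ₀ μ₁ : Measure ℝ) (T₀ : ℝ → ℝ) : Prop :=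
  Monotone T₀ ∧ Measure.map T₀ μ₀ = μ₁

/-- convex conjugate relative to `[a,b]`. -/
def conjOn (f : ℝ → ℝ) (a b y : ℝ) : ℝ := sSup ((fun x => x * y - f x) '' Icc a b)

theorem convexOn_of_forall_exists_subgradient {s : Set ℝ} {φ : ℝ → ℝ} (hs : Convex ℝ s)
    (h : ∀ y ∈ s, ∃ c, ∀ y' ∈ s, c * (y' - y) ≤ φ y' - φ y) : ConvexOn ℝ s φ := by
  refine ⟨hs, fun y₁ hy₁ y₂ hy₂ a b ha hb hab => ?_⟩
  obtain ⟨c, hc⟩ := h _ (hs hy₁ hy₂ ha hb hab)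
  simp only [smul_eq_mul] at hc ⊢
  have hbal : a * (y₁ - (a * y₁ + b * y₂)) + b * (y₂ - (a * y₁ + b * y₂)) = 0 := by
    linear_combination (-(a * y₁ + b * y₂)) * hab
  linear_combination mul_le_mul_of_nonneg_left (hc y₁ hy₁) ha +
    mul_le_mul_of_nonneg_left (hc y₂ hy₂) hb - c * hbal - φ (a * y₁ + b * y₂) * hab

theorem div_mul_le_of_le_mul_of_le_mul {lam Lam M Q m L ε : ℝ} (hε : 0 < ε) (hm : 0 < m)
    (hL : 0 ≤ L) (hQ : ε ≤ m * Q) (hmL : m ≤ Lam * L) (hM : lam * (M * L / 2) ≤ ε) :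
    lam / (2 * Lam) * M ≤ Q := by
  have hQ0 : 0 ≤ Q := (pos_of_mul_pos_right (hε.trans_le hQ) hm.le).le
  have hLamL : 0 < Lam * L := hm.trans_le hmL
  have hLam : 0 < Lam := pos_of_mul_pos_left hLamL hL
  rw [div_mul_eq_mul_div, div_le_iff₀ (by positivity)]
  refine le_of_mul_le_mul_right ?_ (pos_of_mul_pos_right hLamL hLam.le)
  linarith [mul_le_mul_of_nonneg_right hmL hQ0]

theorem setIntegral_max_zero {α : Type*} [MeasurableSpace α] {μ : Measure α} {K : Set α}
    {φ : α → ℝ} (hK : MeasurableSet K) (hs : MeasurableSet {y ∈ K | 0 ≤ φ y}) :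
    ∫ y in K, max (φ y) 0 ∂μ = ∫ y in {y ∈ K | 0 ≤ φ y}, φ y ∂μ := by
  rw [← inter_eq_right.2 (sep_subset K _), ← setIntegral_indicator hs]
  refine setIntegral_congr_fun hK fun y hy => ?_
  by_cases h : 0 ≤ φ y
  · rw [indicator_of_mem (show y ∈ {y ∈ K | 0 ≤ φ y} from ⟨hy, h⟩), max_eq_left h]
  · rw [indicator_of_notMem fun h' => h h'.2, max_eq_right (not_le.1 h).le]

section SecX

variable {ν : Measure ℝ} {f g : ℝ → ℝ} {a b x x' ε : ℝ}

theorem Tmap_eq_setAverage : Tmap ν f g a b x = ⨍ y in secX f g a b x, y ∂ν := by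
  rw [Tmap, setAverage_eq, smul_eq_mul, measureReal_def, inv_mul_eq_div]

theorem continuousOn_xi (hg : ContinuousOn g (Icc a b)) (x : ℝ) :
    ContinuousOn (fun y => x * y - f x - g y) (Icc a b) := by
  fun_prop

theorem isClosed_secX (hg : ContinuousOn g (Icc a b)) (x : ℝ) : IsClosed (secX f g a b x) :=
  (continuousOn_xi hg x).preimage_isClosed_of_isClosed isClosed_Icc isClosed_Ici

theorem setIntegral_secX_eq (hg : ContinuousOn g (Icc a b))
    (hx : ∫ y in Icc a b, max (x * y - f x - g y) 0 ∂ν = ε) :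
    ∫ y in secX f g a b x, (x * y - f x - g y) ∂ν = ε := by
  rw [← hx, setIntegral_max_zero measurableSet_Icc (isClosed_secX hg x).measurableSet]
  rfl

theorem measure_secX_ne_zero (hε : 0 < ε) (hg : ContinuousOn g (Icc a b))
    (hx : ∫ y in Icc a b, max (x * y - f x - g y) 0 ∂ν = ε) : ν (secX f g a b x) ≠ 0 := by
  intro h
  rw [← setIntegral_secX_eq hg hx, Measure.restrict_eq_zero.2 h, integral_zero_measure] at hε
  exact hε.false

theorem secX_eq_Icc (hg : ContinuousOn g (Icc a b))
    (hconc : ConcaveOn ℝ (Icc a b) fun y => x * y - f x - g y) (hne : (secX f g a b x).Nonempty) :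
    secX f g a b x = Icc (ymF f g a b x) (yMF f g a b x) :=
  eq_Icc_csInf_csSup_of_connected_bdd_closed ((hconc.convex_ge 0).isConnected hne)
    (bddBelow_Icc.mono (sep_subset _ _)) (bddAbove_Icc.mono (sep_subset _ _)) (isClosed_secX hg x)

variable [IsFiniteMeasure ν]

theorem Tmap_mem_Icc (hg : ContinuousOn g (Icc a b)) (h0 : ν (secX f g a b x) ≠ 0) :
    Tmap ν f g a b x ∈ Icc a b := by
  rw [Tmap_eq_setAverage]
  exact (convex_Icc a b).set_average_mem isClosed_Icc h0 (measure_ne_top _ _)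
    (ae_restrict_of_forall_mem (isClosed_secX hg x).measurableSet fun y hy => hy.1)
    (continuousOn_id.integrableOn_Icc.mono_set (sep_subset _ _))

theorem Tmap_mul_sub_le (hε : 0 < ε) (hg : ContinuousOn g (Icc a b))
    (hx : ∫ y in Icc a b, max (x * y - f x - g y) 0 ∂ν = ε)
    (hx' : ∫ y in Icc a b, max (x' * y - f x' - g y) 0 ∂ν = ε) :
    Tmap ν f g a b x * (x' - x) ≤ f x' - f x := by
  set S := secX f g a b x
  have hSK : S ⊆ Icc a b := sep_subset _ _
  have hm : 0 < ν.real S := ENNReal.toReal_pos (measure_secX_ne_zero hε hg hx) (measure_ne_top _ _)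
  have hid : IntegrableOn (fun y => y) S ν := continuousOn_id.integrableOn_Icc.mono_set hSK
  have hξ : ∀ z, IntegrableOn (fun y => z * y - f z - g y) (Icc a b) ν :=
    fun z => (continuousOn_xi hg z).integrableOn_Icc
  have hξmax : IntegrableOn (fun y => max (x' * y - f x' - g y) 0) (Icc a b) ν :=
    ((continuousOn_xi hg x').sup continuousOn_const).integrableOn_Icc
  have hshift : ∫ y in S, (x' * y - f x' - g y) ∂ν =
      ε + ((x' - x) * ∫ y in S, y ∂ν - (f x' - f x) * ν.real S) := by
    have hsplit : ∀ y, x' * y - f x' - g y =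
        (x * y - f x - g y) + ((x' - x) * y - (f x' - f x)) := fun y => by ring
    simp_rw [hsplit]
    have haff : IntegrableOn (fun y => (x' - x) * y - (f x' - f x)) S ν :=
      (hid.const_mul _).sub (integrableOn_const (measure_ne_top _ _))
    rw [integral_add ((hξ x).mono_set hSK) haff,
      integral_sub (hid.const_mul _) (integrableOn_const (measure_ne_top _ _)),
      integral_const_mul, setIntegral_const, setIntegral_secX_eq hg hx, smul_eq_mul,
      mul_comm (ν.real S)]
  have hle : ∫ y in S, (x' * y - f x' - g y) ∂ν ≤ ε :=
    calc ∫ y in S, (x' * y - f x' - g y) ∂ν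
        ≤ ∫ y in S, max (x' * y - f x' - g y) 0 ∂ν :=
          setIntegral_mono_on ((hξ x').mono_set hSK) (hξmax.mono_set hSK)
            (isClosed_secX hg x).measurableSet fun y _ => le_max_left _ _
      _ ≤ ∫ y in Icc a b, max (x' * y - f x' - g y) 0 ∂ν :=
          setIntegral_mono_set hξmax (.of_forall fun y => le_max_right _ _) hSK.eventuallyLE
      _ = ε := hx'
  rw [hshift] at hle
  rw [Tmap, ← measureReal_def, div_mul_eq_mul_div, div_le_iff₀ hm]
  linarith

theorem setIntegral_secX_le_mul (hg : ContinuousOn g (Icc a b))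
    (hconc : ConcaveOn ℝ (Icc a b) fun y => x * y - f x - g y) (h0 : ν (secX f g a b x) ≠ 0) :
    ∫ y in secX f g a b x, (x * y - f x - g y) ∂ν ≤
      ν.real (secX f g a b x) * (x * Tmap ν f g a b x - f x - g (Tmap ν f g a b x)) := by
  have hjensen := hconc.le_map_set_average (f := id) (continuousOn_xi hg x) isClosed_Icc h0
    (measure_ne_top _ _)
    (ae_restrict_of_forall_mem (isClosed_secX hg x).measurableSet fun y hy => hy.1)
    (continuousOn_id.integrableOn_Icc.mono_set (sep_subset _ _))
    ((continuousOn_xi hg x).integrableOn_Icc.mono_set (sep_subset _ _))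
  simp only [id_eq] at hjensen
  rwa [← Tmap_eq_setAverage, setAverage_eq, smul_eq_mul,
    inv_mul_le_iff₀ (show 0 < ν.real _ from ENNReal.toReal_pos h0 (measure_ne_top _ _))] at hjensen

end SecX

theorem integral_mul_sub_div_sub (M p q : ℝ) :
    ∫ y in p..q, M * ((y - p) / (q - p)) = M * (q - p) / 2 := by
  rcases eq_or_ne q p with rfl | hpq
  · simp
  · have : q - p ≠ 0 := sub_ne_zero.2 hpq
    simp only [intervalIntegral.integral_const_mul, intervalIntegral.integral_div,
      intervalIntegral.intervalIntegrable_id, intervalIntegrable_const,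
      intervalIntegral.integral_sub, integral_id, intervalIntegral.integral_const, smul_eq_mul]
    field_simp
    ring

theorem ConcaveOn.mul_div_le_of_mem_segment {s : Set ℝ} {h : ℝ → ℝ} (hh : ConcaveOn ℝ s h)
    {c e y M : ℝ} (hc : c ∈ s) (he : e ∈ s) (hc0 : 0 ≤ h c) (hM : M ≤ h e)
    (hy : y ∈ segment ℝ c e) : M * ((y - c) / (e - c)) ≤ h y := by
  obtain ⟨p, q, hp, hq, hpq, rfl⟩ := hy
  rcases eq_or_ne e c with rfl | hec
  · -- here `y = c` and the left side is `M * (0 / 0) = 0`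
    rw [← add_smul, hpq, one_smul]
    simpa using hc0
  have hq' : (p • c + q • e - c) / (e - c) = q := by
    rw [smul_eq_mul, smul_eq_mul, div_eq_iff (sub_ne_zero.2 hec), eq_sub_of_add_eq hpq]
    ring
  rw [hq']
  calc M * q ≤ p * h c + q * h e := by
        linarith [mul_nonneg hp hc0, mul_le_mul_of_nonneg_left hM hq]
    _ ≤ h (p • c + q • e) := hh.2 hc he hp hq hpq

theorem mul_sub_div_two_le_integral_of_concaveOn {h : ℝ → ℝ} {c d e M : ℝ} (hce : c ≤ e)
    (hed : e ≤ d) (hh : ConcaveOn ℝ (Icc c d) h) (hcont : ContinuousOn h (Icc c d))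
    (hc : 0 ≤ h c) (hd : 0 ≤ h d) (he : M ≤ h e) :
    M * (d - c) / 2 ≤ ∫ y in c..d, h y := by
  have hcI : c ∈ Icc c d := ⟨le_rfl, hce.trans hed⟩
  have hdI : d ∈ Icc c d := ⟨hce.trans hed, le_rfl⟩
  have heI : e ∈ Icc c d := ⟨hce, hed⟩
  have hint : ∀ {p q}, p ∈ Icc c d → q ∈ Icc c d → IntervalIntegrable h volume p q :=
    fun hp hq => (hcont.mono (uIcc_subset_Icc hp hq)).intervalIntegrable
  have hleft : ∫ y in c..e, M * ((y - c) / (e - c)) ≤ ∫ y in c..e, h y :=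
    intervalIntegral.integral_mono_on hce ((by fun_prop : Continuous _).intervalIntegrable _ _)
      (hint hcI heI) fun y hy =>
      hh.mul_div_le_of_mem_segment hcI heI hc he (segment_eq_Icc hce ▸ hy)
  have hright : ∫ y in e..d, M * ((y - d) / (e - d)) ≤ ∫ y in e..d, h y :=
    intervalIntegral.integral_mono_on hed ((by fun_prop : Continuous _).intervalIntegrable _ _)
      (hint heI hdI) fun y hy =>
      hh.mul_div_le_of_mem_segment hdI heI hd he (segment_symm ℝ d e ▸ segment_eq_Icc hed ▸ hy)
  rw [integral_mul_sub_div_sub] at hleft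
  rw [intervalIntegral.integral_symm, integral_mul_sub_div_sub] at hright
  rw [← intervalIntegral.integral_add_adjacent_intervals (hint hcI heI) (hint heI hdI)]
  linarith

theorem setIntegral_withDensity_ofReal {α : Type*} [MeasurableSpace α] {μ : Measure α}
    {u : α → ℝ} {s : Set α} (hu : AEMeasurable u (μ.restrict s)) (hu0 : ∀ y ∈ s, 0 ≤ u y)
    (hs : MeasurableSet s) (φ : α → ℝ) :
    ∫ y in s, φ y ∂μ.withDensity (fun y => ENNReal.ofReal (u y)) = ∫ y in s, u y * φ y ∂μ := by
  -- `ENNReal.ofReal r` is by definition `↑r.toNNReal`.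
  refine (setIntegral_withDensity_eq_setIntegral_smul₀ hu.real_toNNReal φ hs).trans
    (setIntegral_congr_fun hs fun y hy => ?_)
  rw [NNReal.smul_def, smul_eq_mul, Real.coe_toNNReal _ (hu0 y hy)]

namespace IsGoodMarginal

variable {μ : Measure ℝ} {u : ℝ → ℝ} {a b lam Lam : ℝ} {s : Set ℝ}

theorem setIntegral_eq (h : IsGoodMarginal μ u a b lam Lam) (hlam : 0 ≤ lam)
    (hs : MeasurableSet s) (hsK : s ⊆ Icc a b) (φ : ℝ → ℝ) :
    ∫ y in s, φ y ∂μ = ∫ y in s, u y * φ y := by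
  rw [h.2.1, setIntegral_withDensity_ofReal (h.2.2.1.aemeasurable measurableSet_Icc).restrict
      (fun y hy => hlam.trans (h.2.2.2 y (hsK hy)).1) hs, Measure.restrict_restrict hs,
    inter_eq_left.2 hsK]

theorem measureReal_le (h : IsGoodMarginal μ u a b lam Lam) (hlam : 0 ≤ lam)
    (hs : MeasurableSet s) (hsK : s ⊆ Icc a b) : μ.real s ≤ Lam * volume.real s :=
  calc μ.real s = ∫ y in s, u y := by simpa using h.setIntegral_eq hlam hs hsK fun _ => 1
    _ ≤ ∫ y in s, Lam := setIntegral_mono_on (h.2.2.1.integrableOn_Icc.mono_set hsK)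
        (continuousOn_const.integrableOn_Icc.mono_set hsK) hs fun y hy => (h.2.2.2 y (hsK hy)).2
    _ = Lam * volume.real s := by rw [setIntegral_const, smul_eq_mul, mul_comm]

theorem mul_setIntegral_le (h : IsGoodMarginal μ u a b lam Lam) (hlam : 0 ≤ lam)
    (hs : MeasurableSet s) (hsK : s ⊆ Icc a b) {φ : ℝ → ℝ} (hφ : ContinuousOn φ (Icc a b))
    (hφ0 : ∀ y ∈ s, 0 ≤ φ y) : lam * ∫ y in s, φ y ≤ ∫ y in s, φ y ∂μ := by
  rw [h.setIntegral_eq hlam hs hsK, ← integral_const_mul]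
  exact setIntegral_mono_on ((continuousOn_const.mul hφ).integrableOn_Icc.mono_set hsK)
    ((h.2.2.1.mul hφ).integrableOn_Icc.mono_set hsK) hs
    fun y hy => mul_le_mul_of_nonneg_right (h.2.2.2 y (hsK hy)).1 (hφ0 y hy)

theorem mul_le_setIntegral_of_concaveOn (h : IsGoodMarginal μ u a b lam Lam) (hlam : 0 ≤ lam)
    {φ : ℝ → ℝ} {c d e M : ℝ} (hcd : Icc c d ⊆ Icc a b) (hce : c ≤ e) (hed : e ≤ d)
    (hφ : ContinuousOn φ (Icc a b)) (hconc : ConcaveOn ℝ (Icc c d) φ) (hc : 0 ≤ φ c)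
    (hd : 0 ≤ φ d) (he : M ≤ φ e) : lam * (M * (d - c) / 2) ≤ ∫ y in Icc c d, φ y ∂μ := by
  have hcd' : c ≤ d := hce.trans hed
  calc lam * (M * (d - c) / 2) ≤ lam * ∫ y in Icc c d, φ y := by
        refine mul_le_mul_of_nonneg_left ?_ hlam
        rw [integral_Icc_eq_integral_Ioc, ← intervalIntegral.integral_of_le hcd']
        exact mul_sub_div_two_le_integral_of_concaveOn hce hed hconc (hφ.mono hcd) hc hd he
    _ ≤ ∫ y in Icc c d, φ y ∂μ :=
        h.mul_setIntegral_le hlam measurableSet_Icc hcd hφ fun y hy =>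
          (le_min hc hd).trans (hconc.ge_on_segment (left_mem_Icc.2 hcd') (right_mem_Icc.2 hcd')
            (segment_eq_Icc hcd' ▸ hy))

end IsGoodMarginal

namespace IsPotentialPair

variable {μ₀ μ₁ : Measure ℝ} {a₀ b₀ a₁ b₁ ε x x' : ℝ} {f g : ℝ → ℝ}

theorem symm (h : IsPotentialPair μ₀ μ₁ a₀ b₀ a₁ b₁ ε f g) :
    IsPotentialPair μ₁ μ₀ a₁ b₁ a₀ b₀ ε g f := by
  obtain ⟨hf, hg, h₀, h₁⟩ := h
  refine ⟨hg, hf, fun y hy => ?_, fun x hx => ?_⟩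
  · rw [← h₁ y hy]
    congr 1 with x
    ring_nf
  · rw [← h₀ x hx]
    congr 1 with y
    ring_nf

theorem continuousOn_right (h : IsPotentialPair μ₀ μ₁ a₀ b₀ a₁ b₁ ε f g) :
    ContinuousOn g (Icc a₁ b₁) :=
  h.2.1.choose_spec.continuousOn

theorem Tmap_mem_Icc [IsFiniteMeasure μ₁] (h : IsPotentialPair μ₀ μ₁ a₀ b₀ a₁ b₁ ε f g)
    (hε : 0 < ε) (hx : x ∈ Icc a₀ b₀) : Tmap μ₁ f g a₁ b₁ x ∈ Icc a₁ b₁ :=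
  _root_.Tmap_mem_Icc h.continuousOn_right
    (measure_secX_ne_zero hε h.continuousOn_right (h.2.2.1 x hx))

theorem Tmap_mul_sub_le [IsFiniteMeasure μ₁] (h : IsPotentialPair μ₀ μ₁ a₀ b₀ a₁ b₁ ε f g)
    (hε : 0 < ε) (hx : x ∈ Icc a₀ b₀) (hx' : x' ∈ Icc a₀ b₀) :
    Tmap μ₁ f g a₁ b₁ x * (x' - x) ≤ f x' - f x :=
  _root_.Tmap_mul_sub_le hε h.continuousOn_right (h.2.2.1 x hx) (h.2.2.1 x' hx')

theorem convexOn_left [IsFiniteMeasure μ₁] (h : IsPotentialPair μ₀ μ₁ a₀ b₀ a₁ b₁ ε f g)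
    (hε : 0 < ε) : ConvexOn ℝ (Icc a₀ b₀) f :=
  convexOn_of_forall_exists_subgradient (convex_Icc _ _) fun x hx =>
    ⟨Tmap μ₁ f g a₁ b₁ x, fun _ hx' => h.Tmap_mul_sub_le hε hx hx'⟩

theorem concaveOn_xi [IsFiniteMeasure μ₀] (h : IsPotentialPair μ₀ μ₁ a₀ b₀ a₁ b₁ ε f g)
    (hε : 0 < ε) (x : ℝ) : ConcaveOn ℝ (Icc a₁ b₁) fun y => x * y - f x - g y := by
  refine ((((LinearMap.mulLeft ℝ x).concaveOn (convex_Icc a₁ b₁)).add_const (-f x)).sub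
    (h.symm.convexOn_left hε)).congr fun y _ => ?_
  simp [sub_eq_add_neg]

theorem div_mul_sSup_le [IsFiniteMeasure μ₀] [IsFiniteMeasure μ₁] {u₁ : ℝ → ℝ} {lam Lam : ℝ}
    (h : IsPotentialPair μ₀ μ₁ a₀ b₀ a₁ b₁ ε f g) (hμ₁ : IsGoodMarginal μ₁ u₁ a₁ b₁ lam Lam)
    (hlam : 0 ≤ lam) (hε : 0 < ε) (hx : x ∈ Icc a₀ b₀) :
    lam / (2 * Lam) * sSup ((fun y => x * y - f x - g y) '' Icc a₁ b₁) ≤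
      x * Tmap μ₁ f g a₁ b₁ x - f x - g (Tmap μ₁ f g a₁ b₁ x) := by
  have hg := h.continuousOn_right
  have hconc := h.concaveOn_xi hε x
  have hpot := h.2.2.1 x hx
  have h0 := measure_secX_ne_zero hε hg hpot
  set S := secX f g a₁ b₁ x
  have hS : MeasurableSet S := (isClosed_secX hg x).measurableSet
  have hSK : S ⊆ Icc a₁ b₁ := sep_subset _ _
  have hm : 0 < μ₁.real S := ENNReal.toReal_pos h0 (measure_ne_top _ _)
  obtain ⟨y₀, hy₀⟩ := nonempty_of_measure_ne_zero h0
  obtain ⟨e, heK, hmax⟩ := isCompact_Icc.exists_isMaxOn ⟨y₀, hSK hy₀⟩ (continuousOn_xi hg x)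
  rw [(IsGreatest.csSup_eq ⟨mem_image_of_mem _ heK, forall_mem_image.2 fun y hy => hmax hy⟩)]
  set c := ymF f g a₁ b₁ x
  set d := yMF f g a₁ b₁ x
  have hSI : S = Icc c d := secX_eq_Icc hg hconc ⟨y₀, hy₀⟩
  have hcd : c ≤ d := nonempty_Icc.1 (hSI ▸ ⟨y₀, hy₀⟩)
  have hcS : c ∈ S := hSI ▸ left_mem_Icc.2 hcd
  have hdS : d ∈ S := hSI ▸ right_mem_Icc.2 hcd
  have heS : e ∈ Icc c d := hSI ▸ ⟨heK, hy₀.2.trans (hmax (hSK hy₀))⟩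
  have hjensen := setIntegral_secX_eq hg hpot ▸ setIntegral_secX_le_mul hg hconc h0
  have hmass : μ₁.real S ≤ Lam * (d - c) := by
    simpa only [hSI, Real.volume_real_Icc_of_le hcd] using hμ₁.measureReal_le hlam hS hSK
  have htent := hμ₁.mul_le_setIntegral_of_concaveOn hlam (hSI ▸ hSK) heS.1 heS.2
    (continuousOn_xi hg x) (hconc.subset (hSI ▸ hSK) (convex_Icc c d)) hcS.2 hdS.2 le_rfl
  rw [← hSI, setIntegral_secX_eq hg hpot] at htent
  exact div_mul_le_of_le_mul_of_le_mul hε hm (sub_nonneg.2 hcd) hjensen hmass htent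

end IsPotentialPair

theorem stmt6_general
    (a₀ b₀ a₁ b₁ lam Lam : ℝ) (μ₀ μ₁ : Measure ℝ) (u₀ u₁ : ℝ → ℝ)
    (hlam : 0 < lam)
    (hμ₀ : IsGoodMarginal μ₀ u₀ a₀ b₀ lam Lam)
    (hμ₁ : IsGoodMarginal μ₁ u₁ a₁ b₁ lam Lam)
    (ε : ℝ) (hε : 0 < ε) (f g : ℝ → ℝ)
    (hfg : IsPotentialPair μ₀ μ₁ a₀ b₀ a₁ b₁ ε f g) :
    ∀ x ∈ Icc a₀ b₀,
      lam / (2 * Lam) * sSup ((fun y => x * y - f x - g y) '' Icc a₁ b₁) ≤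
        x * Tmap μ₁ f g a₁ b₁ x - f x - g (Tmap μ₁ f g a₁ b₁ x) ∧
      x * Tmap μ₁ f g a₁ b₁ x - f x - g (Tmap μ₁ f g a₁ b₁ x) =
        sSup ((fun x' => x' * Tmap μ₁ f g a₁ b₁ x - f x' - g (Tmap μ₁ f g a₁ b₁ x)) ''
          Icc a₀ b₀) ∧
      x * Tmap μ₁ f g a₁ b₁ x - f x - g (Tmap μ₁ f g a₁ b₁ x) ≤
        sSup ((fun y => x * y - f x - g y) '' Icc a₁ b₁) := by
  have := hμ₀.1
  have := hμ₁.1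
  intro x hx
  set T := Tmap μ₁ f g a₁ b₁ x
  have hxT : ∀ x' ∈ Icc a₀ b₀, x' * T - f x' - g T ≤ x * T - f x - g T := fun x' hx' => by
    linarith [hfg.Tmap_mul_sub_le hε hx hx']
  have hbdd := (isCompact_Icc.image_of_continuousOn
    (continuousOn_xi (f := f) hfg.continuousOn_right x)).bddAbove
  exact ⟨hfg.div_mul_sSup_le hμ₁ hlam.le hε hx,
    (IsGreatest.csSup_eq ⟨mem_image_of_mem _ hx, forall_mem_image.2 hxT⟩).symm,
    le_csSup hbdd (mem_image_of_mem _ (hfg.Tmap_mem_Icc hε hx))⟩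

theorem stmt6
    (a₀ b₀ a₁ b₁ lam Lam : ℝ) (μ₀ μ₁ : Measure ℝ) (u₀ u₁ : ℝ → ℝ)
    (hab₀ : a₀ < b₀) (hab₁ : a₁ < b₁) (hlam : 0 < lam)
    (hμ₀ : IsGoodMarginal μ₀ u₀ a₀ b₀ lam Lam)
    (hμ₁ : IsGoodMarginal μ₁ u₁ a₁ b₁ lam Lam)
    (ε : ℝ) (hε : 0 < ε) (f g : ℝ → ℝ)
    (hfg : IsPotentialPair μ₀ μ₁ a₀ b₀ a₁ b₁ ε f g) :
    ∀ x ∈ Icc a₀ b₀,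
      lam / (2 * Lam) * sSup ((fun y => x * y - f x - g y) '' Icc a₁ b₁) ≤
        x * Tmap μ₁ f g a₁ b₁ x - f x - g (Tmap μ₁ f g a₁ b₁ x) ∧
      x * Tmap μ₁ f g a₁ b₁ x - f x - g (Tmap μ₁ f g a₁ b₁ x) =
        sSup ((fun x' => x' * Tmap μ₁ f g a₁ b₁ x - f x' - g (Tmap μ₁ f g a₁ b₁ x)) ''
          Icc a₀ b₀) ∧
      x * Tmap μ₁ f g a₁ b₁ x - f x - g (Tmap μ₁ f g a₁ b₁ x) ≤
        sSup ((fun y => x * y - f x - g y) '' Icc a₁ b₁) :=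
  stmt6_general a₀ b₀ a₁ b₁ lam Lam μ₀ μ₁ u₀ u₁ hlam hμ₀ hμ₁ ε hε f g hfg
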